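/- arXiv:2006.08982 — 3 statements merged into one kernel-verified Lean document; each statement's English description precedes it below -/
import Mathlib

section
/- Any multivariate continuous function can be represented as a superposition of one-dimensional functions: for every n ≥ 1 and every continuous function f : [0,1]^n → ℝ, there exist continuous one-variable functions f_q : ℝ → ℝ (q = 1, …, 2n+1) and g_{q,p} : [0,1] → ℝ (q = 1, …, 2n+1; p = 1, …, n) such that f(t_1, …, t_n) = Σ_{q=1}^{2n+1} f_q( Σ_{p=1}^{n} g_{q,p}(t_p) ) for all (t_1, …, t_n) ∈ [0,1]^n. -/
/-!
Kolmogorov's proof, in Lorentz's form. For each of `2n + 1` shifts `q`, cut the line into closed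
intervals of length `2n h`, separated by gaps of length `h` and shifted by `q h`; their products are
the `q`-cubes of step `h`. A coordinate lies in a gap for at most one shift, so every point of
`[0,1]^n` lies in a `q`-cube for at least `n + 1` of the shifts.

The inner functions are a uniform limit of corrections. The `k`-th correction makes each
`Y q t = ∑ p, g q p (t p)` constant on the `q`-cubes of a step `h_k → 0`, by composing with a
retraction onto grid points, and injective on the set of these cubes, by adding a small generic
multiple of a base-`W` code of the cube; the later corrections are too small to close the gaps
between these values.

Given such `Y`, a continuous `φ` is approximated by `∑ q, G q ∘ Y q`, where on the image of each
`q`-cube `G q` is `φ / (n + 1)` evaluated at some point of that cube. At least `n + 1` terms are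
then nearly right and the others are at most `‖φ‖ / (n + 1)`, so the error has norm at most
`(2n + 1) / (2n + 2) ‖φ‖`. Approximating the successive errors gives `φ` as a geometric series of
such superpositions.
-/

open Set Filter Topology Finset

namespace KolmogorovArnold

/-! ### Shifted grids -/

/-- The staircase climbs linearly on `[i, i + γ]` and is constant `i + 1` on `[i + γ, i + 1]`. -/
noncomputable def staircase (γ s : ℝ) : ℝ := ⌊s⌋ + min 1 (Int.fract s / γ)

section Staircase

variable {γ : ℝ}

lemma staircase_monotone (hγ : 0 < γ) : Monotone (staircase γ) := by
  intro s s' hss'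
  have hmin_nonneg : ∀ u, 0 ≤ min 1 (Int.fract u / γ) :=
    fun u => le_min zero_le_one (div_nonneg (Int.fract_nonneg u) hγ.le)
  rcases (Int.floor_le_floor hss').eq_or_lt with hfl | hfl
  · have hfract : Int.fract s ≤ Int.fract s' := by
      rw [Int.fract, Int.fract, hfl]; linarith
    unfold staircase
    rw [hfl]
    gcongr
  · have : (⌊s⌋ : ℝ) + 1 ≤ ⌊s'⌋ := by exact_mod_cast hfl
    unfold staircase
    linarith [min_le_left 1 (Int.fract s / γ), hmin_nonneg s']

lemma staircase_surjective (hγ : 0 < γ) (hγ₁ : γ ≤ 1) : Function.Surjective (staircase γ) := by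
  intro y
  have hy₀ := Int.fract_nonneg y
  have hy₁ := Int.fract_lt_one y
  have hfloor : ⌊(⌊y⌋ : ℝ) + γ * Int.fract y⌋ = ⌊y⌋ := by
    rw [add_comm, Int.floor_add_intCast, Int.floor_eq_zero_iff.2 ⟨by positivity, by nlinarith⟩,
      zero_add]
  have hfract : Int.fract ((⌊y⌋ : ℝ) + γ * Int.fract y) = γ * Int.fract y := by
    rw [Int.fract, hfloor, add_sub_cancel_left]
  refine ⟨⌊y⌋ + γ * Int.fract y, ?_⟩
  rw [staircase, hfloor, hfract, mul_div_cancel_left₀ _ hγ.ne', min_eq_right hy₁.le]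
  exact Int.floor_add_fract y

lemma continuous_staircase (hγ : 0 < γ) (hγ₁ : γ ≤ 1) : Continuous (staircase γ) :=
  (staircase_monotone hγ).continuous_of_surjective (staircase_surjective hγ hγ₁)

lemma abs_staircase_sub_le (hγ : 0 < γ) (s : ℝ) : |staircase γ s - s| ≤ 1 := by
  have h₀ : 0 ≤ min 1 (Int.fract s / γ) :=
    le_min zero_le_one (div_nonneg (Int.fract_nonneg s) hγ.le)
  have h₁ := min_le_left 1 (Int.fract s / γ)
  have hs : staircase γ s - s = min 1 (Int.fract s / γ) - Int.fract s := by
    rw [staircase, Int.fract]; ring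
  rw [hs, abs_le]
  constructor <;> linarith [Int.fract_nonneg s, Int.fract_lt_one s]

lemma staircase_eq (hγ : 0 < γ) (i : ℤ) {s : ℝ} (h₁ : i + γ ≤ s) (h₂ : s ≤ i + 1) :
    staircase γ s = i + 1 := by
  rcases h₂.eq_or_lt with rfl | hlt
  · have : ((i : ℝ) + 1) = ((i + 1 : ℤ) : ℝ) := by push_cast; ring
    rw [staircase, this, Int.floor_intCast, Int.fract_intCast, zero_div, min_eq_right zero_le_one,
      add_zero]
  · have hfloor : ⌊s⌋ = i := Int.floor_eq_iff.2 ⟨by linarith, hlt⟩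
    have hfract : γ ≤ Int.fract s := by rw [Int.fract, hfloor]; linarith
    rw [staircase, hfloor, min_eq_left ((one_le_div hγ).2 hfract)]

end Staircase

/-- The interval `i` of the `q`-th shifted grid of step `h` and period `N h`; it is followed by
the gap `gridGap N h q i` of length `h`. -/
def gridInterval (N : ℕ) (h : ℝ) (q i : ℕ) : Set ℝ :=
  Icc (h * (q + N * i + 1 - N)) (h * (q + N * i))

def gridGap (N : ℕ) (h : ℝ) (q i : ℕ) : Set ℝ := Ioo (h * (q + N * i)) (h * (q + N * i + 1))

def gridPoint (N : ℕ) (h : ℝ) (q : ℕ) (y : ℝ) : ℝ := h * (q + N * y)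

/-- A continuous function equal to `i` on `gridInterval N h q i`. -/
noncomputable def gridIndex (N : ℕ) (h : ℝ) (q : ℕ) (x : ℝ) : ℝ :=
  staircase (1 / N) ((x - h * q) / (h * N))

section Grid

variable {N : ℕ} {h : ℝ} {q : ℕ}

lemma continuous_gridIndex (hN : 0 < N) : Continuous (gridIndex N h q) :=
  (continuous_staircase (by positivity) (div_le_one_of_le₀ (mod_cast hN) N.cast_nonneg)).comp
    ((continuous_id.sub continuous_const).div_const _)

lemma gridIndex_eq (hN : 0 < N) (hh : 0 < h) {i : ℕ} {x : ℝ} (hx : x ∈ gridInterval N h q i) :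
    gridIndex N h q x = i := by
  have hhN : 0 < h * N := by positivity
  obtain ⟨hx₁, hx₂⟩ := hx
  have h₁ : (((i : ℤ) - 1 : ℤ) : ℝ) + 1 / N ≤ (x - h * q) / (h * N) := by
    rw [le_div_iff₀ hhN]
    push_cast
    field_simp
    linarith
  have h₂ : (x - h * q) / (h * N) ≤ (((i : ℤ) - 1 : ℤ) : ℝ) + 1 := by
    rw [div_le_iff₀ hhN]
    push_cast
    linarith
  rw [gridIndex, staircase_eq (by positivity) _ h₁ h₂]
  push_cast
  ring

lemma abs_gridPoint_gridIndex_sub_le (hN : 0 < N) (hh : 0 < h) (x : ℝ) :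
    |gridPoint N h q (gridIndex N h q x) - x| ≤ h * N := by
  have hhN : 0 < h * N := by positivity
  set s := (x - h * q) / (h * N)
  have hx : x - h * q = h * N * s := by simp only [s]; field_simp
  have hs := abs_staircase_sub_le (γ := 1 / N) (by positivity) s
  calc |gridPoint N h q (gridIndex N h q x) - x| = |h * N * (staircase (1 / N) s - s)| := by
        rw [gridPoint, gridIndex]
        congr 1
        linear_combination -hx
    _ ≤ h * N := by
        rw [abs_mul, abs_of_pos hhN]
        exact mul_le_of_le_one_right hhN.le hs

lemma abs_gridIndex_le (hN : 0 < N) (hh : 0 < h) (hq : q ≤ N) {x : ℝ}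
    (hx : x ∈ Icc (0 : ℝ) 1) : |gridIndex N h q x| ≤ 1 / h + 2 := by
  have hN₁ : (1 : ℝ) ≤ N := by exact_mod_cast hN
  have hqN : (q : ℝ) ≤ N := by exact_mod_cast hq
  have hhN : 0 < h * N := by positivity
  have hs : |(x - h * q) / (h * N)| ≤ 1 / h + 1 := by
    rw [abs_div, abs_of_pos hhN, div_le_iff₀ hhN, abs_le]
    have : 1 ≤ (1 / h) * (h * N) := by field_simp; exact hN₁
    constructor <;> nlinarith [hx.1, hx.2]
  set s := (x - h * q) / (h * N)
  have := abs_staircase_sub_le (γ := 1 / N) (by positivity) s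
  have := abs_sub_abs_le_abs_sub (staircase (1 / N) s) s
  rw [gridIndex]
  linarith

/-- Gaps of different shifts `q < N` are disjoint: their left ends `h (q + N i)` are distinct
multiples of `h`. -/
lemma eq_of_mem_gridGap (hh : 0 < h) {q' i i' : ℕ} (hq : q < N) (hq' : q' < N) {x : ℝ}
    (hx : x ∈ gridGap N h q i) (hx' : x ∈ gridGap N h q' i') : q = q' := by
  have h₁ : ((q + N * i : ℕ) : ℝ) < (q' + N * i' : ℕ) + 1 := by
    push_cast
    exact lt_of_mul_lt_mul_left (hx.1.trans hx'.2) hh.le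
  have h₂ : ((q' + N * i' : ℕ) : ℝ) < (q + N * i : ℕ) + 1 := by
    push_cast
    exact lt_of_mul_lt_mul_left (hx'.1.trans hx.2) hh.le
  have hsum : q + N * i = q' + N * i' := by
    have := Nat.cast_lt.1 (h₁.trans_eq (by norm_cast))
    have := Nat.cast_lt.1 (h₂.trans_eq (by norm_cast))
    omega
  simpa [Nat.add_mul_mod_self_left, Nat.mod_eq_of_lt hq, Nat.mod_eq_of_lt hq'] using
    congrArg (· % N) hsum

lemma exists_mem_gridInterval (hh : 0 < h) (hq : q < N) {x : ℝ} (hx : 0 ≤ x)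
    (hgap : ∀ i, x ∉ gridGap N h q i) : ∃ i, x ∈ gridInterval N h q i := by
  have hN : (0 : ℝ) < N := by exact_mod_cast q.zero_le.trans_lt hq
  have hqN : (q : ℝ) + 1 ≤ N := by exact_mod_cast hq
  rcases hc : ⌈(x / h - q) / N⌉₊ with _ | j
  · have hxq : x ≤ h * q := by
      have := (div_le_iff₀ hN).1 (Nat.ceil_eq_zero.1 hc)
      rw [zero_mul, sub_nonpos, div_le_iff₀ hh] at this
      linarith
    refine ⟨0, ?_, ?_⟩ <;> push_cast <;> nlinarith
  · have hj₁ : (j : ℝ) < (x / h - q) / N := Nat.lt_ceil.1 (by omega)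
    have hj₂ : (x / h - q) / N ≤ j + 1 := by exact_mod_cast Nat.ceil_le.1 hc.le
    rw [lt_div_iff₀ hN, lt_sub_iff_add_lt, lt_div_iff₀ hh] at hj₁
    rw [div_le_iff₀ hN, sub_le_iff_le_add, div_le_iff₀ hh] at hj₂
    have hgap_j : ¬ (h * (q + N * j) < x ∧ x < h * (q + N * j + 1)) := hgap j
    have hlo : h * (q + N * j + 1) ≤ x := by
      by_contra hlt
      exact hgap_j ⟨by linarith, by linarith⟩
    refine ⟨j + 1, ?_, ?_⟩ <;> push_cast <;> linarith

lemma le_floor_of_mem_gridInterval (hh : 0 < h) {i : ℕ} {x : ℝ}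
    (hx : x ∈ gridInterval N h q i) (hx₁ : x ≤ 1) : i ≤ ⌊1 / h⌋₊ := by
  obtain ⟨hlo, hhi⟩ := hx
  apply Nat.le_floor
  rw [le_div_iff₀ hh]
  rcases i.eq_zero_or_pos with rfl | hi
  · simp
  · have hN : (1 : ℝ) ≤ N := by nlinarith
    have hi₁ : (1 : ℝ) ≤ i := by exact_mod_cast hi
    have hq : (0 : ℝ) ≤ q := q.cast_nonneg
    nlinarith [mul_le_mul_of_nonneg_right hN (sub_nonneg.2 hi₁)]

end Grid

abbrev unitCube (n : ℕ) : Set (Fin n → ℝ) := univ.pi fun _ => Icc 0 1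

instance (n : ℕ) : CompactSpace (unitCube n) :=
  isCompact_iff_compactSpace.1 (isCompact_univ_pi fun _ => isCompact_Icc)

def gridCube {n : ℕ} (N : ℕ) (h : ℝ) (q : ℕ) (ι : Fin n → ℕ) : Set (Fin n → ℝ) :=
  univ.pi fun p => gridInterval N h q (ι p)

/-- Contains the indices of all the grid cubes of step `h` that meet the unit cube. -/
noncomputable def cubeIndices (n : ℕ) (h : ℝ) : Finset (Fin n → ℕ) :=
  Fintype.piFinset fun _ => range (⌊1 / h⌋₊ + 1)

section GridCube

variable {n N : ℕ} {h : ℝ} {q : ℕ}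

lemma isClosed_gridCube (ι : Fin n → ℕ) : IsClosed (gridCube N h q ι) :=
  isClosed_set_pi fun _ _ => isClosed_Icc

lemma dist_le_of_mem_gridCube (hh : 0 ≤ h) {ι : Fin n → ℕ} {t t' : Fin n → ℝ}
    (ht : t ∈ gridCube N h q ι) (ht' : t' ∈ gridCube N h q ι) : dist t t' ≤ h * N :=
  (dist_pi_le_iff (by positivity)).2 fun p =>
    (Real.dist_le_of_mem_Icc (ht p (mem_univ p)) (ht' p (mem_univ p))).trans (by nlinarith)

lemma mem_cubeIndices (hh : 0 < h) {ι : Fin n → ℕ} {t : Fin n → ℝ}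
    (ht : t ∈ gridCube N h q ι) (ht₁ : t ∈ unitCube n) : ι ∈ cubeIndices n h :=
  Fintype.mem_piFinset.2 fun p => mem_range.2 <| Nat.lt_succ_of_le <|
    le_floor_of_mem_gridInterval hh (ht p (mem_univ p)) (ht₁ p (mem_univ p)).2

open Classical in
/-- Each coordinate of `t` lies in the gaps of at most one shift, so `t` lies in a grid cube of
all but at most `n` of the `N` shifts. -/
theorem le_card_filter_exists_mem_gridCube (hh : 0 < h) {t : Fin n → ℝ} (ht : t ∈ unitCube n) :
    N - n ≤ #{q : Fin N | ∃ ι ∈ cubeIndices n h, t ∈ gridCube N h q ι} := by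
  set bad : Finset (Fin N) := univ.biUnion fun p => {q | ∃ i, t p ∈ gridGap N h q i}
  have hbad : #bad ≤ n := by
    refine card_biUnion_le.trans ?_
    calc ∑ p, #({q | ∃ i, t p ∈ gridGap N h q i} : Finset (Fin N)) ≤ ∑ _p : Fin n, 1 := by
          refine sum_le_sum fun p _ => card_le_one.2 fun q hq q' hq' => ?_
          obtain ⟨i, hi⟩ := (mem_filter.1 hq).2
          obtain ⟨i', hi'⟩ := (mem_filter.1 hq').2
          exact Fin.ext (eq_of_mem_gridGap hh q.isLt q'.isLt hi hi')
      _ = n := by simp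
  have hgood :
      badᶜ ⊆ ({q : Fin N | ∃ ι ∈ cubeIndices n h, t ∈ gridCube N h q ι} : Finset (Fin N)) := by
    intro q hq
    simp only [bad, Finset.mem_compl, Finset.mem_biUnion, Finset.mem_univ, true_and, mem_filter,
      not_exists] at hq
    choose ι hι using fun p => exists_mem_gridInterval hh q.isLt (ht p (mem_univ p)).1 (hq p)
    have hιt : t ∈ gridCube N h q ι := fun p _ => hι p
    exact mem_filter.2 ⟨Finset.mem_univ q, ι, mem_cubeIndices hh hιt ht, hιt⟩
  calc N - n ≤ N - #bad := by omega
    _ = #badᶜ := by rw [card_compl, Fintype.card_fin]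
    _ ≤ _ := card_le_card hgood

end GridCube

/-! ### Inner functions -/

lemma exists_mem_Ioo_forall_injOn_add_mul {κ ι : Type*} [Finite κ] {s : Set ι} (hs : s.Finite)
    (a : κ → ι → ℝ) {d : ι → ℝ} (hd : InjOn d s) {ε₀ : ℝ} (hε₀ : 0 < ε₀) :
    ∃ ε ∈ Ioo 0 ε₀, ∀ k, InjOn (fun i => a k i + ε * d i) s := by
  set bad : Set ℝ := ⋃ k, ⋃ i ∈ s, ⋃ j ∈ s, {(a k j - a k i) / (d i - d j)}
  have hbad : bad.Finite :=
    finite_iUnion fun k => hs.biUnion fun i _ => hs.biUnion fun j _ => finite_singleton _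
  obtain ⟨ε, hε, hεbad⟩ := ((Ioo_infinite hε₀).sdiff hbad).nonempty
  refine ⟨ε, hε, fun k i hi j hj hij => ?_⟩
  by_contra hne
  have hdij : d i - d j ≠ 0 := sub_ne_zero.2 fun h => hne (hd hi hj h)
  refine hεbad (mem_iUnion.2 ⟨k, mem_iUnion₂.2 ⟨i, hi, mem_iUnion₂.2 ⟨j, hj, ?_⟩⟩⟩)
  rw [mem_singleton_iff, eq_div_iff hdij]
  linear_combination hij

lemma exists_pos_le_abs_sub_of_injOn {κ ι : Type*} [Finite κ] {s : Set ι} (hs : s.Finite)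
    {f : κ → ι → ℝ} (hf : ∀ k, InjOn (f k) s) :
    ∃ b > 0, ∀ k, ∀ i ∈ s, ∀ j ∈ s, i ≠ j → b ≤ |f k i - f k j| := by
  set gaps : Set ℝ := ⋃ k, ⋃ i ∈ s, ⋃ j ∈ s, ⋃ (_ : i ≠ j), {|f k i - f k j|}
  have hgaps : gaps.Finite := finite_iUnion fun k => hs.biUnion fun i _ => hs.biUnion fun j _ =>
    finite_iUnion fun _ => finite_singleton _
  have hev : ∀ᶠ b in 𝓝[>] (0 : ℝ), ∀ x ∈ gaps, b ≤ x := by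
    refine hgaps.eventually_all.2 fun x hx => ?_
    simp only [gaps, mem_iUnion, mem_singleton_iff] at hx
    obtain ⟨k, i, hi, j, hj, hij, rfl⟩ := hx
    have hpos : 0 < |f k i - f k j| := abs_pos.2 (sub_ne_zero.2 fun h => hij (hf k hi hj h))
    exact nhdsWithin_le_nhds ((eventually_lt_nhds hpos).mono fun _ => le_of_lt)
  obtain ⟨b, hb, hbpos⟩ := (hev.and self_mem_nhdsWithin).exists
  refine ⟨b, hbpos, fun k i hi j hj hij => hb _ ?_⟩
  exact mem_iUnion.2 ⟨k, mem_iUnion₂.2 ⟨i, hi, mem_iUnion₂.2 ⟨j, hj, mem_iUnion.2 ⟨hij, rfl⟩⟩⟩⟩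

theorem exists_tendsto_forall_dist_le {E : Type*} [PseudoMetricSpace E] [CompleteSpace E]
    {f : ℕ → E} {B : ℕ → ℝ} (hB : ∀ k, B (k + 1) ≤ B k / 2)
    (hf : ∀ k, dist (f k) (f (k + 1)) ≤ B k / 2) :
    ∃ a, Tendsto f atTop (𝓝 a) ∧ ∀ k, dist (f k) a ≤ B k := by
  have hgeom : ∀ k j, B (k + j) ≤ B k / 2 ^ j := by
    intro k j
    induction j with
    | zero => simp
    | succ j ih =>
      rw [← add_assoc, pow_succ, ← div_div]
      exact (hB _).trans (by gcongr)
  have hshift : ∀ k j, dist (f (k + j)) (f (k + j + 1)) ≤ B k / 2 / 2 ^ j := fun k j =>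
    (hf _).trans (by rw [div_right_comm]; gcongr; exact hgeom k j)
  obtain ⟨a, ha⟩ := cauchySeq_tendsto_of_complete
    (cauchySeq_of_le_geometric_two (C := B 0) (by simpa using hshift 0))
  refine ⟨a, ha, fun k => ?_⟩
  simpa using dist_le_of_le_geometric_two_of_tendsto₀ (f := fun j => f (k + j)) (hshift k)
    (by simpa only [Function.comp_def, add_comm] using ha.comp (tendsto_add_atTop_nat k))

def innerSum {n : ℕ} (g : Fin n → ℝ → ℝ) (t : Fin n → ℝ) : ℝ := ∑ p, g p (t p)

def SeparatesCubes {n : ℕ} (N : ℕ) (h : ℝ) (Y : Fin N → (Fin n → ℝ) → ℝ) (b : ℝ) : Prop :=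
  ∀ (q : Fin N) ι ι', ι ≠ ι' → ∀ t ∈ gridCube N h q ι ∩ unitCube n,
    ∀ t' ∈ gridCube N h q ι' ∩ unitCube n, b ≤ |Y q t - Y q t'|

def SeparatesFineCubes {n : ℕ} (N : ℕ) (Y : Fin N → (Fin n → ℝ) → ℝ) : Prop :=
  ∀ δ > 0, ∃ h ∈ Set.Ioo 0 δ, ∃ b > 0, SeparatesCubes N h Y b

section InnerSum

variable {n : ℕ} {g g' : Fin n → ℝ → ℝ}

lemma continuousOn_innerSum (hg : ∀ p, ContinuousOn (g p) (Set.Icc 0 1)) :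
    ContinuousOn (innerSum g) (unitCube n) :=
  continuousOn_finsetSum _ fun p _ =>
    (hg p).comp (continuous_apply p).continuousOn fun _ ht => ht p (mem_univ p)

lemma abs_innerSum_sub_le {c : ℝ} (hg : ∀ p, ∀ x ∈ Set.Icc 0 1, |g' p x - g p x| ≤ c)
    {t : Fin n → ℝ} (ht : t ∈ unitCube n) : |innerSum g' t - innerSum g t| ≤ n * c := by
  rw [innerSum, innerSum, ← sum_sub_distrib]
  refine (abs_sum_le_sum_abs _ _).trans ?_
  exact (sum_le_sum (s := univ) fun p _ => hg p (t p) (ht p (mem_univ p))).trans_eq (by simp)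

end InnerSum

namespace SeparatesCubes

variable {n N : ℕ} {h b : ℝ} {Y Y' : Fin N → (Fin n → ℝ) → ℝ}

lemma mono (hY : SeparatesCubes N h Y b) {b' : ℝ} (hb : b' ≤ b) : SeparatesCubes N h Y b' :=
  fun q ι ι' hne t ht t' ht' => hb.trans (hY q ι ι' hne t ht t' ht')

lemma of_abs_sub_le (hY : SeparatesCubes N h Y b) {c : ℝ}
    (hY' : ∀ q, ∀ t ∈ unitCube n, |Y' q t - Y q t| ≤ c) :
    SeparatesCubes N h Y' (b - 2 * c) := by
  intro q ι ι' hne t ht t' ht'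
  have key : |Y q t - Y q t'| ≤ |Y' q t - Y' q t'| + (|Y' q t - Y q t| + |Y' q t' - Y q t'|) :=
    calc |Y q t - Y q t'| = |(Y' q t - Y' q t') - ((Y' q t - Y q t) - (Y' q t' - Y q t'))| := by
          ring_nf
      _ ≤ _ := by
          have := abs_sub (Y' q t - Y' q t') ((Y' q t - Y q t) - (Y' q t' - Y q t'))
          linarith [abs_sub (Y' q t - Y q t) (Y' q t' - Y q t')]
  linarith [hY q ι ι' hne t ht t' ht', hY' q t ht.2, hY' q t' ht'.2]

lemma pairwiseDisjoint_image (hY : SeparatesCubes N h Y b) (hb : 0 < b) (q : Fin N)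
    (s : Set (Fin n → ℕ)) :
    s.PairwiseDisjoint fun ι =>
      (unitCube n).domRestrict (Y q) '' {t | ↑t ∈ gridCube N h q ι} := by
  intro ι _ ι' _ hne
  rw [Function.onFun, Set.disjoint_left]
  rintro _ ⟨t, ht, rfl⟩ ⟨t', ht', heq⟩
  have := hY q ι' ι hne.symm t' ⟨ht', t'.2⟩ t ⟨ht, t.2⟩
  rw [Set.domRestrict_apply, Set.domRestrict_apply] at heq
  rw [heq, sub_self, abs_zero] at this
  linarith

end SeparatesCubes

noncomputable def cubeCode {n : ℕ} (h : ℝ) (ι : Fin n → ℕ) : ℕ :=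
  ∑ p, ι p * (⌊1 / h⌋₊ + 1) ^ (p : ℕ)

/-- Composing `g q p` with the retraction `gridPoint ∘ gridIndex` makes it constant on the grid
intervals; the term `ε W ^ p * gridIndex`, with `W` the base of `cubeCode`, adds `ε` times the code
of the cube to `innerSum`. -/
noncomputable def gridPerturb {n : ℕ} (N : ℕ) (h ε : ℝ) (g : Fin N → Fin n → ℝ → ℝ) (q : Fin N)
    (p : Fin n) (x : ℝ) : ℝ :=
  g q p (gridPoint N h q (gridIndex N h q x)) +
    ε * ((⌊1 / h⌋₊ + 1 : ℕ) : ℝ) ^ (p : ℕ) * gridIndex N h q x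

section Perturbation

variable {n N : ℕ} {h : ℝ} {g : Fin N → Fin n → ℝ → ℝ}

lemma injOn_cubeCode : InjOn (cubeCode (n := n) h) (cubeIndices n h) := by
  intro ι hι ι' hι' heq
  have hlt : ∀ {κ : Fin n → ℕ}, κ ∈ cubeIndices n h → ∀ p, κ p < ⌊1 / h⌋₊ + 1 :=
    fun hκ p => mem_range.1 (Fintype.mem_piFinset.1 hκ p)
  have := finFunctionFinEquiv.injective (a₁ := fun p => ⟨ι p, hlt hι p⟩)
    (a₂ := fun p => ⟨ι' p, hlt hι' p⟩)
    (Fin.ext (by simpa [finFunctionFinEquiv_apply, cubeCode] using heq))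
  funext p
  exact congrArg Fin.val (congrFun this p)

lemma exists_abs_comp_gridPoint_gridIndex_sub_lt (hg : ∀ q p, Continuous (g q p)) {c : ℝ}
    (hc : 0 < c) {δ : ℝ} (hδ : 0 < δ) :
    ∃ h ∈ Set.Ioo 0 δ, ∀ q p, ∀ x ∈ Set.Icc (0 : ℝ) 1,
      |g q p (gridPoint N h q (gridIndex N h q x)) - g q p x| < c := by
  have hG : Continuous fun x q p => g q p x :=
    continuous_pi fun q => continuous_pi fun p => hg q p
  obtain ⟨ρ, hρ, hGρ⟩ := Metric.uniformContinuousOn_iff.1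
    ((isCompact_Icc (a := (-1 : ℝ)) (b := 2)).uniformContinuousOn_of_continuous hG.continuousOn)
    c hc
  set m := min δ (min 1 ρ)
  have hm : 0 < m := lt_min hδ (lt_min one_pos hρ)
  have hm₁ : m ≤ 1 := (min_le_right _ _).trans (min_le_left _ _)
  have hmρ : m ≤ ρ := (min_le_right _ _).trans (min_le_right _ _)
  refine ⟨m / (2 * (N + 1)), ⟨by positivity, ?_⟩, fun q p x hx => ?_⟩
  · calc m / (2 * (N + 1)) ≤ m / 2 := by gcongr; linarith [N.cast_nonneg (α := ℝ)]
      _ < m := half_lt_self hm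
      _ ≤ δ := min_le_left _ _
  · set h := m / (2 * (N + 1))
    have hhN : h * N < m := by
      rw [div_mul_eq_mul_div, div_lt_iff₀ (by positivity)]
      nlinarith [N.cast_nonneg (α := ℝ)]
    have hclose := abs_gridPoint_gridIndex_sub_le (q := q) q.pos (by positivity : 0 < h) x
    set y := gridPoint N h q (gridIndex N h q x)
    rw [abs_le] at hclose
    have hy : y ∈ Set.Icc (-1 : ℝ) 2 := ⟨by linarith [hx.1], by linarith [hx.2]⟩
    have hx' : x ∈ Set.Icc (-1 : ℝ) 2 := ⟨by linarith [hx.1], by linarith [hx.2]⟩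
    calc |g q p y - g q p x| = dist (g q p y) (g q p x) := (Real.dist_eq _ _).symm
      _ ≤ dist (fun q p => g q p y) (fun q p => g q p x) :=
          (dist_le_pi_dist (fun p => g q p y) (fun p => g q p x) p).trans
            (dist_le_pi_dist (fun q p => g q p y) (fun q p => g q p x) q)
      _ < c := hGρ y hy x hx' (by rw [Real.dist_eq, abs_lt]; constructor <;> linarith)

lemma continuous_gridPerturb (hg : ∀ q p, Continuous (g q p)) (ε : ℝ) (q : Fin N) (p : Fin n) :
    Continuous (gridPerturb N h ε g q p) := by
  have := continuous_gridIndex (h := h) (q := q) q.pos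
  unfold gridPerturb gridPoint
  fun_prop

lemma abs_gridPerturb_sub_le (hh : 0 < h) {ε : ℝ} (hε : 0 ≤ ε) {q : Fin N} {p : Fin n}
    {x c : ℝ} (hclose : |g q p (gridPoint N h q (gridIndex N h q x)) - g q p x| ≤ c)
    (hx : x ∈ Set.Icc (0 : ℝ) 1) :
    |gridPerturb N h ε g q p x - g q p x| ≤
      c + ε * ((⌊1 / h⌋₊ + 1 : ℕ) : ℝ) ^ n * (1 / h + 2) := by
  set W : ℝ := ((⌊1 / h⌋₊ + 1 : ℕ) : ℝ) with hW
  have hWp : W ^ (p : ℕ) ≤ W ^ n :=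
    pow_le_pow_right₀ (by simp [W]) p.isLt.le
  have hidx := abs_gridIndex_le (q := q) q.pos hh q.isLt.le hx
  have htag : |ε * W ^ (p : ℕ) * gridIndex N h q x| ≤ ε * W ^ n * (1 / h + 2) := by
    rw [abs_mul, abs_mul, abs_of_nonneg hε, abs_of_nonneg (by positivity)]
    gcongr
  have hsplit : gridPerturb N h ε g q p x - g q p x =
      (g q p (gridPoint N h q (gridIndex N h q x)) - g q p x) +
        ε * W ^ (p : ℕ) * gridIndex N h q x := by
    rw [gridPerturb, hW]; ring
  rw [hsplit]
  exact (abs_add_le _ _).trans (add_le_add hclose htag)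

lemma innerSum_gridPerturb (hh : 0 < h) (ε : ℝ) {q : Fin N} {ι : Fin n → ℕ} {t : Fin n → ℝ}
    (ht : t ∈ gridCube N h q ι) :
    innerSum (gridPerturb N h ε g q) t =
      ∑ p, g q p (gridPoint N h q (ι p)) + ε * cubeCode h ι := by
  have hidx : ∀ p, gridIndex N h q (t p) = ι p :=
    fun p => gridIndex_eq q.pos hh (ht p (mem_univ p))
  simp only [innerSum, gridPerturb, hidx, cubeCode, Nat.cast_sum, Nat.cast_mul, Nat.cast_pow,
    mul_sum, ← sum_add_distrib]
  refine sum_congr rfl fun p _ => ?_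
  push_cast
  ring

theorem exists_near_separatesCubes (hg : ∀ q p, Continuous (g q p)) {c : ℝ} (hc : 0 < c)
    {δ : ℝ} (hδ : 0 < δ) :
    ∃ g' : Fin N → Fin n → ℝ → ℝ, (∀ q p, Continuous (g' q p)) ∧
      (∀ q p, ∀ x ∈ Set.Icc (0 : ℝ) 1, |g' q p x - g q p x| ≤ c) ∧
      ∃ h ∈ Set.Ioo 0 δ, ∃ b > 0, SeparatesCubes N h (fun q => innerSum (g' q)) b := by
  obtain ⟨h, hh, hclose⟩ := exists_abs_comp_gridPoint_gridIndex_sub_lt hg (half_pos hc) hδ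
  set W : ℝ := ((⌊1 / h⌋₊ + 1 : ℕ) : ℝ)
  have hWn : 0 < W ^ n * (1 / h + 2) := by have := hh.1; positivity
  obtain ⟨ε, ⟨hε₀, hε₁⟩, hinj⟩ := exists_mem_Ioo_forall_injOn_add_mul
    (cubeIndices n h).finite_toSet (fun (q : Fin N) ι => ∑ p, g q p (gridPoint N h q (ι p)))
    (Nat.cast_injective.comp_injOn injOn_cubeCode) (div_pos (half_pos hc) hWn)
  obtain ⟨b, hb, hsep⟩ := exists_pos_le_abs_sub_of_injOn (cubeIndices n h).finite_toSet hinj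
  refine ⟨gridPerturb N h ε g, continuous_gridPerturb hg ε, fun q p x hx => ?_, h, hh, b, hb, ?_⟩
  · have hεW : ε * W ^ n * (1 / h + 2) ≤ c / 2 := by
      rw [lt_div_iff₀ hWn] at hε₁
      linarith
    linarith [abs_gridPerturb_sub_le hh.1 hε₀.le (hclose q p x hx).le hx]
  · intro q ι ι' hne t ht t' ht'
    show b ≤ |innerSum (gridPerturb N h ε g q) t - innerSum (gridPerturb N h ε g q) t'|
    rw [innerSum_gridPerturb hh.1 ε ht.1, innerSum_gridPerturb hh.1 ε ht'.1]
    exact hsep q ι (mem_cubeIndices hh.1 ht.1 ht.2) ι' (mem_cubeIndices hh.1 ht'.1 ht'.2)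
      hne

end Perturbation

/-- A stage of the construction of the inner functions. Later stages move `g` by at most `bound`
in total, which costs at most `2 n bound` of the separation margin. -/
structure InnerStage (N n : ℕ) where
  g : Fin N → Fin n → ℝ → ℝ
  continuous_g : ∀ q p, Continuous (g q p)
  bound : ℝ
  bound_pos : 0 < bound
  scale : ℝ
  scale_pos : 0 < scale
  separatesCubes : SeparatesCubes N scale (fun q => innerSum (g q)) ((2 * n + 1) * bound)

theorem InnerStage.exists_near {N n : ℕ} {g : Fin N → Fin n → ℝ → ℝ}
    (hg : ∀ q p, Continuous (g q p)) {B : ℝ} (hB : 0 < B) {δ : ℝ} (hδ : 0 < δ) :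
    ∃ S : InnerStage N n, S.bound ≤ B / 2 ∧ S.scale < δ ∧
      ∀ q p, ∀ x ∈ Set.Icc (0 : ℝ) 1, |S.g q p x - g q p x| ≤ B / 2 := by
  obtain ⟨g', hg', hclose, h, hh, b, hb, hsep⟩ := exists_near_separatesCubes hg (half_pos hB) hδ
  have hn : (0 : ℝ) < 2 * n + 1 := by positivity
  refine ⟨⟨g', hg', min (B / 2) (b / (2 * n + 1)), lt_min (half_pos hB) (div_pos hb hn), h, hh.1,
    hsep.mono ?_⟩, min_le_left _ _, hh.2, hclose⟩
  calc (2 * n + 1) * min (B / 2) (b / (2 * n + 1)) ≤ (2 * n + 1) * (b / (2 * n + 1)) := by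
        gcongr; exact min_le_right _ _
    _ = b := mul_div_cancel₀ _ hn.ne'

noncomputable def InnerStage.near {N n : ℕ} {g : Fin N → Fin n → ℝ → ℝ}
    (hg : ∀ q p, Continuous (g q p)) {B : ℝ} (hB : 0 < B) {δ : ℝ} (hδ : 0 < δ) : InnerStage N n :=
  (InnerStage.exists_near hg hB hδ).choose

lemma InnerStage.near_spec {N n : ℕ} {g : Fin N → Fin n → ℝ → ℝ}
    (hg : ∀ q p, Continuous (g q p)) {B : ℝ} (hB : 0 < B) {δ : ℝ} (hδ : 0 < δ) :
    (near hg hB hδ).bound ≤ B / 2 ∧ (near hg hB hδ).scale < δ ∧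
      ∀ q p, ∀ x ∈ Set.Icc (0 : ℝ) 1, |(near hg hB hδ).g q p x - g q p x| ≤ B / 2 :=
  (InnerStage.exists_near hg hB hδ).choose_spec

noncomputable def innerStages (N n : ℕ) : ℕ → InnerStage N n
  | 0 => InnerStage.near (fun _ _ => continuous_const (y := (0 : ℝ))) one_pos one_pos
  | k + 1 => InnerStage.near (innerStages N n k).continuous_g (innerStages N n k).bound_pos
      (pow_pos one_half_pos (k + 1))

noncomputable def innerLimit (N n : ℕ) (q : Fin N) (p : Fin n) (x : ℝ) : ℝ :=
  limUnder atTop fun k => (innerStages N n k).g q p x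

section InnerLimit

variable {N n : ℕ}

lemma innerStages_succ_spec (k : ℕ) :
    (innerStages N n (k + 1)).bound ≤ (innerStages N n k).bound / 2 ∧
      (innerStages N n (k + 1)).scale < (1 / 2) ^ (k + 1) ∧
      ∀ q p, ∀ x ∈ Set.Icc (0 : ℝ) 1,
        |(innerStages N n (k + 1)).g q p x - (innerStages N n k).g q p x| ≤
          (innerStages N n k).bound / 2 :=
  InnerStage.near_spec _ _ _

lemma bound_innerStages_le (k : ℕ) : (innerStages N n k).bound ≤ (1 / 2) ^ k := by
  induction k with
  | zero => exact (InnerStage.near_spec _ _ _).1.trans (by norm_num)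
  | succ k ih =>
    rw [pow_succ]
    linarith [(innerStages_succ_spec (N := N) (n := n) k).1]

lemma scale_innerStages_lt (k : ℕ) : (innerStages N n k).scale < (1 / 2) ^ k := by
  cases k with
  | zero => exact (InnerStage.near_spec _ _ _).2.1.trans_eq (by norm_num)
  | succ k => exact (innerStages_succ_spec k).2.1

lemma abs_innerLimit_sub_le {x : ℝ} (hx : x ∈ Set.Icc (0 : ℝ) 1) (q : Fin N) (p : Fin n)
    (k : ℕ) :
    |innerLimit N n q p x - (innerStages N n k).g q p x| ≤ (innerStages N n k).bound := by
  obtain ⟨a, ha, hdist⟩ := exists_tendsto_forall_dist_le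
    (f := fun k => (innerStages N n k).g q p x) (fun k => (innerStages_succ_spec k).1)
    (fun k => by rw [Real.dist_eq, abs_sub_comm]; exact (innerStages_succ_spec k).2.2 q p x hx)
  rw [innerLimit, ha.limUnder_eq, abs_sub_comm, ← Real.dist_eq]
  exact hdist k

lemma continuousOn_innerLimit (q : Fin N) (p : Fin n) :
    ContinuousOn (innerLimit N n q p) (Set.Icc 0 1) := by
  refine TendstoUniformlyOn.continuousOn (F := fun k => (innerStages N n k).g q p) (p := atTop)
    ?_ (Frequently.of_forall fun k => ((innerStages N n k).continuous_g q p).continuousOn)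
  rw [Metric.tendstoUniformlyOn_iff]
  intro ε hε
  filter_upwards [(tendsto_pow_atTop_nhds_zero_of_lt_one (by norm_num : (0 : ℝ) ≤ 1 / 2)
    (by norm_num)).eventually (gt_mem_nhds hε)] with k hk x hx
  rw [Real.dist_eq]
  exact (abs_innerLimit_sub_le hx q p k).trans_lt ((bound_innerStages_le k).trans_lt hk)

theorem separatesFineCubes_innerLimit :
    SeparatesFineCubes N fun q => innerSum (innerLimit N n q) := by
  intro δ hδ
  obtain ⟨k, hk⟩ := exists_pow_lt_of_lt_one hδ (by norm_num : (1 / 2 : ℝ) < 1)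
  set S := innerStages N n k
  refine ⟨S.scale, ⟨S.scale_pos, (scale_innerStages_lt k).trans hk⟩, S.bound, S.bound_pos, ?_⟩
  refine (S.separatesCubes.of_abs_sub_le (c := n * S.bound) fun q t ht =>
    abs_innerSum_sub_le (fun p x hx => abs_innerLimit_sub_le hx q p k) ht).mono ?_
  linarith

end InnerLimit

/-! ### Outer functions -/

theorem exists_continuous_abs_le_forall_eq {X κ : Type*} [TopologicalSpace X] [NormalSpace X]
    {P : Finset κ} {K : κ → Set X} (hK : ∀ j ∈ P, IsClosed (K j))
    (hdisj : (P : Set κ).PairwiseDisjoint K) (v : κ → ℝ) {V : ℝ} (hV : 0 ≤ V)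
    (hv : ∀ j ∈ P, |v j| ≤ V) :
    ∃ G : X → ℝ, Continuous G ∧ (∀ x, |G x| ≤ V) ∧ ∀ j ∈ P, ∀ x ∈ K j, G x = v j := by
  classical
  have hψ : ∀ j ∈ P, ∃ ψ : C(X, ℝ), EqOn ψ 0 (⋃ i ∈ P.erase j, K i) ∧ EqOn ψ 1 (K j) ∧
      ∀ x, ψ x ∈ Set.Icc (0 : ℝ) 1 := fun j hj =>
    exists_continuous_zero_one_of_isClosed
      (isClosed_biUnion_finset fun i hi => hK i (Finset.mem_of_mem_erase hi)) (hK j hj)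
      (Set.disjoint_iUnion₂_left.2 fun i hi =>
        hdisj (Finset.mem_of_mem_erase hi) hj (Finset.ne_of_mem_erase hi))
  choose! ψ hψ₀ hψ₁ _ using hψ
  refine ⟨fun x => max (-V) (min V (∑ j ∈ P, v j * ψ j x)), by fun_prop,
    fun x => abs_le.2 ⟨le_max_left _ _, max_le (by linarith) (min_le_left _ _)⟩,
    fun j hj x hx => ?_⟩
  have hsum : ∑ i ∈ P, v i * ψ i x = v j := by
    rw [Finset.sum_eq_single_of_mem j hj, hψ₁ j hj hx, Pi.one_apply, mul_one]
    intro i hi hij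
    rw [hψ₀ i hi (mem_iUnion₂.2 ⟨j, Finset.mem_erase.2 ⟨Ne.symm hij, hj⟩, hx⟩), Pi.zero_apply,
      mul_zero]
  obtain ⟨hv₁, hv₂⟩ := abs_le.1 (hv j hj)
  simp only [hsum, min_eq_right hv₂, max_eq_right hv₁]

theorem abs_sub_sum_le {ι : Type*} [Fintype ι] {s : Finset ι} {k : ℕ} (hk : 0 < k)
    (hks : k ≤ #s) {a : ι → ℝ} {z A η : ℝ} (hz : |z| ≤ A) (hs : ∀ q ∈ s, |a q - z / k| ≤ η / k)
    (ha : ∀ q, |a q| ≤ A / k) :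
    |z - ∑ q, a q| ≤ (Fintype.card ι - k) / k * A + Fintype.card ι * η / k := by
  classical
  have hk' : (0 : ℝ) < k := by exact_mod_cast hk
  have hks' : (k : ℝ) ≤ #s := by exact_mod_cast hks
  have hsι : (#s : ℝ) ≤ Fintype.card ι := by exact_mod_cast s.card_le_univ
  have hη : 0 ≤ η := by
    obtain ⟨q, hq⟩ := Finset.card_pos.1 (hk.trans_le hks)
    have := (abs_nonneg _).trans (hs q hq)
    rwa [le_div_iff₀ hk', zero_mul] at this
  have hsplit : z - ∑ q, a q =
      z * ((k - #s) / k) + ∑ q ∈ s, (z / k - a q) - ∑ q ∈ sᶜ, a q := by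
    rw [← Finset.sum_add_sum_compl s, Finset.sum_sub_distrib, Finset.sum_const, nsmul_eq_mul]
    field_simp
    ring
  have hfrac : 0 ≤ ((#s : ℝ) - k) / k := div_nonneg (by linarith) hk'.le
  have h₁ : |z * ((k - #s) / k)| ≤ A * ((#s - k) / k) := by
    rw [show (k : ℝ) - #s = -(#s - k) by ring, neg_div, mul_neg, abs_neg, abs_mul,
      abs_of_nonneg hfrac]
    exact mul_le_mul_of_nonneg_right hz hfrac
  have h₂ : |∑ q ∈ s, (z / k - a q)| ≤ #s * (η / k) :=
    (abs_sum_le_sum_abs _ _).trans <| (Finset.sum_le_sum fun q hq =>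
      (abs_sub_comm _ _).trans_le (hs q hq)).trans_eq (by rw [Finset.sum_const, nsmul_eq_mul])
  have h₃ : |∑ q ∈ sᶜ, a q| ≤ (Fintype.card ι - #s) * (A / k) := by
    refine (abs_sum_le_sum_abs _ _).trans <| (Finset.sum_le_sum fun q _ => ha q).trans_eq ?_
    rw [Finset.sum_const, nsmul_eq_mul, Finset.card_compl, Nat.cast_sub s.card_le_univ]
  have h₄ : #s * (η / k) ≤ Fintype.card ι * η / k := by
    rw [mul_div_assoc]; gcongr
  have h₅ : A * ((#s - k) / k) + (Fintype.card ι - #s) * (A / k) =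
      (Fintype.card ι - k) / k * A := by
    field_simp; ring
  rw [hsplit]
  linarith [abs_sub (z * ((k - #s) / k) + ∑ q ∈ s, (z / k - a q)) (∑ q ∈ sᶜ, a q),
    abs_add_le (z * ((k - #s) / k)) (∑ q ∈ s, (z / k - a q))]

open Classical in
theorem exists_abs_sub_sum_comp_le {X ι κ : Type*} [TopologicalSpace X] [CompactSpace X]
    [Fintype ι] {Y : ι → X → ℝ} (hY : ∀ q, Continuous (Y q)) {P : Finset κ}
    {S : ι → κ → Set X} (hS : ∀ q j, IsClosed (S q j))
    (hdisj : ∀ q, (P : Set κ).PairwiseDisjoint fun j => Y q '' S q j) {k : ℕ} (hk : 0 < k)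
    (hcover : ∀ x, k ≤ #{q | ∃ j ∈ P, x ∈ S q j}) (φ : C(X, ℝ)) {η : ℝ}
    (hφ : ∀ q j, ∀ x ∈ S q j, ∀ y ∈ S q j, |φ x - φ y| ≤ η) :
    ∃ G : ι → ℝ → ℝ, (∀ q, Continuous (G q)) ∧ (∀ q y, |G q y| ≤ ‖φ‖ / k) ∧
      ∀ x, |φ x - ∑ q, G q (Y q x)| ≤
        (Fintype.card ι - k) / k * ‖φ‖ + Fintype.card ι * η / k := by
  have hφnorm : ∀ x, |φ x| ≤ ‖φ‖ := fun x => by simpa using φ.norm_coe_le_norm x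
  have hk' : (0 : ℝ) < k := by exact_mod_cast hk
  have hv : ∀ q j, ∃ v : ℝ, |v| ≤ ‖φ‖ / k ∧ ∀ x ∈ S q j, |v - φ x / k| ≤ η / k := by
    intro q j
    rcases (S q j).eq_empty_or_nonempty with hSe | ⟨w, hw⟩
    · exact ⟨0, by rw [abs_zero]; positivity, by simp [hSe]⟩
    · refine ⟨φ w / k, ?_, fun x hx => ?_⟩
      · rw [abs_div, abs_of_pos hk']
        gcongr
        exact hφnorm w
      · rw [← sub_div, abs_div, abs_of_pos hk']
        gcongr
        exact hφ q j w hw x hx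
  choose v hvφ hvS using hv
  have hG : ∀ q, ∃ G : ℝ → ℝ, Continuous G ∧ (∀ y, |G y| ≤ ‖φ‖ / k) ∧
      ∀ j ∈ P, ∀ y ∈ Y q '' S q j, G y = v q j := fun q =>
    exists_continuous_abs_le_forall_eq
      (fun j _ => ((hS q j).isCompact.image (hY q)).isClosed) (hdisj q) (v q) (by positivity)
      (fun j _ => hvφ q j)
  choose G hGc hGb hGv using hG
  refine ⟨G, hGc, hGb, fun x => abs_sub_sum_le hk (hcover x) (hφnorm x) (fun q hq => ?_)
    (fun q => hGb q _)⟩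
  obtain ⟨j, hj, hx⟩ := (Finset.mem_filter.1 hq).2
  rw [hGv q j hj _ (mem_image_of_mem _ hx)]
  exact hvS q j x hx

theorem exists_approx_superposition {n : ℕ} {Y : Fin (2 * n + 1) → (Fin n → ℝ) → ℝ}
    (hY : ∀ q, ContinuousOn (Y q) (unitCube n)) (hsep : SeparatesFineCubes (2 * n + 1) Y)
    (φ : C(unitCube n, ℝ)) :
    ∃ G : Fin (2 * n + 1) → ℝ → ℝ, (∀ q, Continuous (G q)) ∧
      (∀ q y, |G q y| ≤ 1 / (n + 1) * ‖φ‖) ∧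
      ∀ t, |φ t - ∑ q, G q (Y q t)| ≤ (2 * n + 1) / (2 * n + 2) * ‖φ‖ := by
  classical
  rcases eq_or_ne φ 0 with rfl | hφ
  · exact ⟨0, fun _ => continuous_const, by simp, by simp⟩
  set η := ‖φ‖ / (2 * (2 * n + 1))
  obtain ⟨δ, hδ, hφδ⟩ := Metric.uniformContinuous_iff.1
    (CompactSpace.uniformContinuous_of_continuous φ.continuous) η
    (by have := norm_pos_iff.2 hφ; positivity)
  obtain ⟨h, ⟨hh, hhδ⟩, b, hb, hYsep⟩ := hsep (δ / (2 * n + 1)) (by positivity)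
  set S : Fin (2 * n + 1) → (Fin n → ℕ) → Set (unitCube n) :=
    fun q ι => {t | (t : Fin n → ℝ) ∈ gridCube (2 * n + 1) h q ι}
  have hcover (t : unitCube n) : n + 1 ≤ #{q | ∃ ι ∈ cubeIndices n h, t ∈ S q ι} :=
    (by omega : n + 1 ≤ 2 * n + 1 - n).trans (le_card_filter_exists_mem_gridCube hh t.2)
  have hosc : ∀ q ι, ∀ t ∈ S q ι, ∀ t' ∈ S q ι, |φ t - φ t'| ≤ η := by
    intro q ι t ht t' ht'
    have hdist : dist t t' < δ := by
      rw [Subtype.dist_eq]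
      calc _ ≤ h * (2 * n + 1 : ℕ) := dist_le_of_mem_gridCube hh.le ht ht'
        _ < δ := by push_cast; rwa [lt_div_iff₀ (by positivity)] at hhδ
    simpa [Real.dist_eq] using (hφδ hdist).le
  obtain ⟨G, hGc, hGb, hGφ⟩ := exists_abs_sub_sum_comp_le (fun q => (hY q).domRestrict)
    (fun q ι => (isClosed_gridCube ι).preimage continuous_subtype_val)
    (fun q => hYsep.pairwiseDisjoint_image hb q _) n.succ_pos hcover φ hosc
  refine ⟨G, hGc, fun q y => (hGb q y).trans_eq (by push_cast; ring),
    fun t => (hGφ t).trans_eq ?_⟩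
  simp only [Fintype.card_fin, η]
  push_cast
  field_simp
  ring

section Iteration

variable {X ι : Type*} [TopologicalSpace X] [CompactSpace X] [Fintype ι] {Y : ι → X → ℝ}
  {C θ : ℝ}

lemma exists_partial_sums_approx (hY : ∀ q, Continuous (Y q)) (hC : 0 ≤ C) (hθ : 0 ≤ θ)
    (happrox : ∀ φ : C(X, ℝ), ∃ G : ι → ℝ → ℝ, (∀ q, Continuous (G q)) ∧
      (∀ q y, |G q y| ≤ C * ‖φ‖) ∧ ∀ x, |φ x - ∑ q, G q (Y q x)| ≤ θ * ‖φ‖)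
    (φ : C(X, ℝ)) :
    ∃ G : ℕ → ι → ℝ → ℝ, (∀ j q, Continuous (G j q)) ∧
      (∀ j q y, |G j q y| ≤ C * (θ ^ j * ‖φ‖)) ∧
      ∀ J x, |φ x - ∑ j ∈ range J, ∑ q, G j q (Y q x)| ≤ θ ^ J * ‖φ‖ := by
  choose G hGc hGb hGφ using happrox
  let superpose (ψ : C(X, ℝ)) : C(X, ℝ) :=
    ⟨fun x => ∑ q, G ψ q (Y q x), continuous_finsetSum _ fun q _ => (hGc ψ q).comp (hY q)⟩
  let residual : ℕ → C(X, ℝ) := fun j => Nat.rec φ (fun _ ψ => ψ - superpose ψ) j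
  have hres : ∀ J x, residual J x = φ x - ∑ j ∈ range J, ∑ q, G (residual j) q (Y q x) := by
    intro J x
    induction J with
    | zero => simp [residual]
    | succ J ih => rw [Finset.sum_range_succ, ← sub_sub, ← ih]; rfl
  have hnorm : ∀ J, ‖residual J‖ ≤ θ ^ J * ‖φ‖ := by
    intro J
    induction J with
    | zero => simp [residual]
    | succ J ih =>
      have hstep : ∀ x, residual (J + 1) x = residual J x - ∑ q, G (residual J) q (Y q x) :=
        fun x => rfl
      calc ‖residual (J + 1)‖ ≤ θ * ‖residual J‖ :=
            (ContinuousMap.norm_le _ (by positivity)).2 fun x => by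
              simpa [Real.norm_eq_abs, hstep] using hGφ (residual J) x
        _ ≤ θ * (θ ^ J * ‖φ‖) := by gcongr
        _ = θ ^ (J + 1) * ‖φ‖ := by ring
  refine ⟨fun j => G (residual j), fun j => hGc _,
    fun j q y => (hGb _ q y).trans (by gcongr; exact hnorm j), fun J x => ?_⟩
  rw [← hres]
  simpa [Real.norm_eq_abs] using ((residual J).norm_coe_le_norm x).trans (hnorm J)

theorem exists_sum_comp_eq_of_approx (hY : ∀ q, Continuous (Y q)) (hC : 0 ≤ C) (hθ₀ : 0 ≤ θ)
    (hθ₁ : θ < 1)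
    (happrox : ∀ φ : C(X, ℝ), ∃ G : ι → ℝ → ℝ, (∀ q, Continuous (G q)) ∧
      (∀ q y, |G q y| ≤ C * ‖φ‖) ∧ ∀ x, |φ x - ∑ q, G q (Y q x)| ≤ θ * ‖φ‖)
    (φ : C(X, ℝ)) :
    ∃ F : ι → ℝ → ℝ, (∀ q, Continuous (F q)) ∧ ∀ x, φ x = ∑ q, F q (Y q x) := by
  obtain ⟨G, hGc, hGb, hGφ⟩ := exists_partial_sums_approx hY hC hθ₀ happrox φ
  have hsum : Summable fun j => C * (θ ^ j * ‖φ‖) :=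
    ((summable_geometric_of_lt_one hθ₀ hθ₁).mul_right _).mul_left _
  have hGb' : ∀ j q y, ‖G j q y‖ ≤ C * (θ ^ j * ‖φ‖) := fun j q y =>
    (Real.norm_eq_abs _).trans_le (hGb j q y)
  refine ⟨fun q y => ∑' j, G j q y, fun q => continuous_tsum (fun j => hGc j q) hsum (hGb' · q),
    fun x => tendsto_nhds_unique (l := atTop)
      (f := fun J => ∑ j ∈ range J, ∑ q, G j q (Y q x)) ?_ ?_⟩
  · have hres : Tendsto (fun J => φ x - ∑ j ∈ range J, ∑ q, G j q (Y q x)) atTop (𝓝 0) :=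
      squeeze_zero_norm (fun J => (Real.norm_eq_abs _).trans_le (hGφ J x))
        (by simpa using (tendsto_pow_atTop_nhds_zero_of_lt_one hθ₀ hθ₁).mul_const ‖φ‖)
    simpa using (tendsto_const_nhds (x := φ x)).sub hres
  · simp_rw [Finset.sum_comm (s := range _)]
    exact tendsto_finsetSum _ fun q _ =>
      (hsum.of_norm_bounded (hGb' · q (Y q x))).hasSum.tendsto_sum_nat

end Iteration

end KolmogorovArnold

open KolmogorovArnold

theorem kolmogorov_arnold_representation_general (n : ℕ)
    (f : (Fin n → ℝ) → ℝ)
    (hf : ContinuousOn f (Set.univ.pi fun _ : Fin n => Set.Icc (0 : ℝ) 1)) :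
    ∃ (F : Fin (2 * n + 1) → ℝ → ℝ) (g : Fin (2 * n + 1) → Fin n → ℝ → ℝ),
      (∀ q, Continuous (F q)) ∧
      (∀ q p, ContinuousOn (g q p) (Set.Icc (0 : ℝ) 1)) ∧
      (∀ t ∈ Set.univ.pi fun _ : Fin n => Set.Icc (0 : ℝ) 1,
        f t = ∑ q : Fin (2 * n + 1), F q (∑ p : Fin n, g q p (t p))) := by
  have hY : ∀ q, ContinuousOn (innerSum (innerLimit (2 * n + 1) n q)) (unitCube n) :=
    fun q => continuousOn_innerSum (continuousOn_innerLimit q)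
  have hθ : (2 * n + 1 : ℝ) / (2 * n + 2) < 1 := by
    rw [div_lt_one (by positivity)]; linarith
  obtain ⟨F, hF, hrepr⟩ := exists_sum_comp_eq_of_approx (fun q => (hY q).domRestrict)
    (C := 1 / (n + 1)) (by positivity) (by positivity) hθ
    (exists_approx_superposition hY separatesFineCubes_innerLimit)
    ⟨(unitCube n).domRestrict f, hf.domRestrict⟩
  exact ⟨F, innerLimit (2 * n + 1) n, hF, continuousOn_innerLimit, fun t ht => hrepr ⟨t, ht⟩⟩

/-- Kolmogorov–Arnold representation theorem: any multivariate continuous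
function on the unit cube `[0,1]^n` can be represented as a superposition of
one-dimensional continuous functions. -/
theorem kolmogorov_arnold_representation (n : ℕ) (hn : 1 ≤ n)
    (f : (Fin n → ℝ) → ℝ)
    (hf : ContinuousOn f (Set.univ.pi fun _ : Fin n => Set.Icc (0 : ℝ) 1)) :
    ∃ (F : Fin (2 * n + 1) → ℝ → ℝ) (g : Fin (2 * n + 1) → Fin n → ℝ → ℝ),
      (∀ q, Continuous (F q)) ∧
      (∀ q p, ContinuousOn (g q p) (Set.Icc (0 : ℝ) 1)) ∧
      (∀ t ∈ Set.univ.pi fun _ : Fin n => Set.Icc (0 : ℝ) 1,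
        f t = ∑ q : Fin (2 * n + 1), F q (∑ p : Fin n, g q p (t p))) :=
  kolmogorov_arnold_representation_general n f hf
end

section
/- The gradient of the KL divergence in the log-linear model: fix a probability distribution p̂ on Ω, s₀ ∈ S, and θ : Ω → ℝ with θ(s) = 0 for s ∉ S. Then the function x ↦ D_KL(p̂, p_{θ[s₀ ↦ x]}) is differentiable at x = θ(s₀) with derivative η_θ(s₀) − η̂(s₀). -/
open scoped Classical BigOperators

/-!
Moving `θ(s₀)` to `x` changes the energy `∑_{s ≤ ω} θ(s)` by `x - θ(s₀)` exactly on the up-set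
of `s₀`, so along this line the model is a one-parameter exponential family. Since `p̂` sums to
one, `D_KL(p̂, p_θ) = ∑ p̂ log p̂ - ∑ p̂ · energy + ψ(θ)`: the middle term has derivative `-η̂(s₀)`
and the log-partition function `ψ` has derivative the `p_θ`-mass of the up-set, `η_θ(s₀)`.
-/

open Finset Real

theorem Finset.sum_update_eq_ite_add_sum_sdiff {ι M : Type*} [DecidableEq ι] [AddCommMonoid M]
    (s : Finset ι) (f : ι → M) (i : ι) (x : M) :
    ∑ j ∈ s, Function.update f i x j = (if i ∈ s then x else 0) + ∑ j ∈ s \ {i}, f j := by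
  split_ifs with hi
  · exact sum_update_of_mem hi f x
  · rw [sum_update_of_notMem hi, sdiff_singleton_eq_erase, erase_eq_of_notMem hi, zero_add]

section
variable {ι : Type*} [Fintype ι]

theorem sum_mul_log_div_exp_sub {q : ι → ℝ} (hq0 : ∀ i, 0 ≤ q i) (hq1 : ∑ i, q i = 1)
    (e : ι → ℝ) (c : ℝ) :
    ∑ i, q i * log (q i / exp (e i - c)) = ∑ i, q i * log (q i) - ∑ i, q i * e i + c := by
  have hterm : ∀ i, q i * log (q i / exp (e i - c)) = q i * log (q i) - q i * e i + q i * c := by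
    intro i
    rcases (hq0 i).eq_or_lt with hqi | hqi
    · simp [← hqi]
    · rw [log_div hqi.ne' (exp_ne_zero _), log_exp]
      ring
  simp only [hterm, sum_add_distrib, sum_sub_distrib, ← sum_mul, hq1, one_mul]

theorem hasDerivAt_log_sum_exp_affine [Nonempty ι] (c b : ι → ℝ) (x : ℝ) :
    HasDerivAt (fun t => log (∑ i, exp (c i + b i * t)))
      ((∑ i, b i * exp (c i + b i * x)) / ∑ i, exp (c i + b i * x)) x := by
  have hsum : HasDerivAt (fun t => ∑ i, exp (c i + b i * t)) (∑ i, b i * exp (c i + b i * x)) x :=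
    HasDerivAt.fun_sum fun i _ => by
      simpa [mul_comm] using (((hasDerivAt_id x).const_mul (b i)).const_add (c i)).exp
  exact hsum.log (sum_pos (fun i _ => exp_pos _) univ_nonempty).ne'

theorem hasDerivAt_sum_mul_log_div_gibbs [Nonempty ι] {q : ι → ℝ} (hq0 : ∀ i, 0 ≤ q i)
    (hq1 : ∑ i, q i = 1) (c b : ι → ℝ) (x : ℝ) :
    HasDerivAt
      (fun t => ∑ i, q i * log (q i / exp (c i + b i * t - log (∑ j, exp (c j + b j * t)))))
      (∑ i, b i * exp (c i + b i * x - log (∑ j, exp (c j + b j * x))) - ∑ i, q i * b i) x := by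
  have hZ : 0 < ∑ j, exp (c j + b j * x) := sum_pos (fun i _ => exp_pos _) univ_nonempty
  have hmean : HasDerivAt (fun t => ∑ i, q i * (c i + b i * t)) (∑ i, q i * b i) x := by
    simpa using HasDerivAt.fun_sum fun i (_ : i ∈ univ) =>
      (((hasDerivAt_id x).const_mul (b i)).const_add (c i)).const_mul (q i)
  simp only [sum_mul_log_div_exp_sub hq0 hq1]
  refine (((hasDerivAt_const x _).sub hmean).add
    (hasDerivAt_log_sum_exp_affine c b x)).congr_deriv ?_
  simp only [exp_sub, exp_log hZ, mul_div_assoc', ← sum_div]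
  ring

end

theorem deriv_KL_eq_eta_sub_etahat_general
    {Ω : Type*} [Fintype Ω] [Nonempty Ω] [PartialOrder Ω]
    (S : Finset Ω) (s₀ : Ω) (hs₀ : s₀ ∈ S)
    (θ : Ω → ℝ)
    (phat : Ω → ℝ) (hphat0 : ∀ ω, 0 ≤ phat ω) (hphat1 : ∑ ω : Ω, phat ω = 1)
    (ψ : (Ω → ℝ) → ℝ)
    (hψ : ∀ ϑ : Ω → ℝ,
      ψ ϑ = Real.log (∑ ω : Ω, Real.exp (∑ s ∈ S.filter (fun s => s ≤ ω), ϑ s)))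
    (p : (Ω → ℝ) → Ω → ℝ)
    (hp : ∀ ϑ ω, p ϑ ω = Real.exp ((∑ s ∈ S.filter (fun s => s ≤ ω), ϑ s) - ψ ϑ))
    (KL : (Ω → ℝ) → ℝ)
    (hKL : ∀ ϑ : Ω → ℝ, KL ϑ = ∑ ω : Ω, phat ω * Real.log (phat ω / p ϑ ω))
    (η ηhat : Ω → ℝ)
    (hη : ∀ s, η s = ∑ ω ∈ Finset.univ.filter (fun ω => s ≤ ω), p θ ω)
    (hηhat : ∀ s, ηhat s = ∑ ω ∈ Finset.univ.filter (fun ω => s ≤ ω), phat ω) :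
    HasDerivAt (fun x : ℝ => KL (Function.update θ s₀ x))
      (η s₀ - ηhat s₀) (θ s₀) := by
  set c : Ω → ℝ := fun ω => ∑ s ∈ S.filter (· ≤ ω) \ {s₀}, θ s
  set b : Ω → ℝ := fun ω => if s₀ ≤ ω then 1 else 0
  have henergy : ∀ x ω, ∑ s ∈ S.filter (· ≤ ω), Function.update θ s₀ x s = c ω + b ω * x := by
    intro x ω
    simp only [sum_update_eq_ite_add_sum_sdiff, mem_filter, hs₀, true_and, c, b, boole_mul]
    ring
  have henergy₀ : ∀ ω, ∑ s ∈ S.filter (· ≤ ω), θ s = c ω + b ω * θ s₀ := by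
    simpa only [Function.update_eq_self] using henergy (θ s₀)
  have hKL_update : (fun x => KL (Function.update θ s₀ x)) = fun x =>
      ∑ ω, phat ω * log (phat ω / exp (c ω + b ω * x - log (∑ ω', exp (c ω' + b ω' * x)))) := by
    funext x
    simp only [hKL, hp, hψ, henergy]
  rw [hKL_update]
  refine (hasDerivAt_sum_mul_log_div_gibbs hphat0 hphat1 c b (θ s₀)).congr_deriv ?_
  simp only [hη, hηhat, hp, hψ, henergy₀, sum_filter, b, boole_mul, mul_boole]

/-- The gradient of the KL divergence from a fixed empirical distribution `p̂`
to the log-linear model `p_θ`: the partial derivative with respect to `θ(s₀)`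
equals `η_θ(s₀) − η̂(s₀)`. -/
theorem deriv_KL_eq_eta_sub_etahat
    {Ω : Type*} [Fintype Ω] [Nonempty Ω] [PartialOrder Ω]
    (S : Finset Ω) (s₀ : Ω) (hs₀ : s₀ ∈ S)
    (θ : Ω → ℝ) (hθ : ∀ s ∉ S, θ s = 0)
    (phat : Ω → ℝ) (hphat0 : ∀ ω, 0 ≤ phat ω) (hphat1 : ∑ ω : Ω, phat ω = 1)
    (ψ : (Ω → ℝ) → ℝ)
    (hψ : ∀ ϑ : Ω → ℝ,
      ψ ϑ = Real.log (∑ ω : Ω, Real.exp (∑ s ∈ S.filter (fun s => s ≤ ω), ϑ s)))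
    (p : (Ω → ℝ) → Ω → ℝ)
    (hp : ∀ ϑ ω, p ϑ ω = Real.exp ((∑ s ∈ S.filter (fun s => s ≤ ω), ϑ s) - ψ ϑ))
    (KL : (Ω → ℝ) → ℝ)
    (hKL : ∀ ϑ : Ω → ℝ, KL ϑ = ∑ ω : Ω, phat ω * Real.log (phat ω / p ϑ ω))
    (η ηhat : Ω → ℝ)
    (hη : ∀ s, η s = ∑ ω ∈ Finset.univ.filter (fun ω => s ≤ ω), p θ ω)
    (hηhat : ∀ s, ηhat s = ∑ ω ∈ Finset.univ.filter (fun ω => s ≤ ω), phat ω) :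
    HasDerivAt (fun x : ℝ => KL (Function.update θ s₀ x))
      (η s₀ - ηhat s₀) (θ s₀) :=
  deriv_KL_eq_eta_sub_etahat_general S s₀ hs₀ θ phat hphat0 hphat1 ψ hψ p hp KL hKL η ηhat hη hηhat
end

section
/- Strict convexity and uniqueness of the optimal parameters under linear independence of features: for each s ∈ S let φ_s ∈ ℝ^Ω be the indicator vector φ_s(ω) = 1 if s ≤ ω and 0 otherwise, and suppose the family {φ_s}_{s ∈ S} together with the constant vector (1,…,1) ∈ ℝ^Ω is linearly independent. Then for any probability distribution p̂ on Ω, the function θ ↦ D_KL(p̂, p_θ) on ℝ^S is strictly convex, and hence has at most one minimizer. -/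
/-!
With the feature map `A θ = ∑ s, θ s • φ s`, the model is `p_θ = softmax (A θ)` and
`ψ = logSumExp ∘ A`, so `D_KL(p̂, p_θ) = ψ θ - ⟨p̂, A θ⟩ + const` and everything reduces to
strict convexity of `ψ`. Log-sum-exp is strictly convex along every non-constant direction:
after normalising both exponent vectors by their log-sum-exp, strict convexity of `exp` at a
coordinate where they differ makes the convex combination sum to less than `1`. Linear
independence of the features together with the constant vector says precisely that
`A (θ₁ - θ₂)` is never constant when `θ₁ ≠ θ₂`.
-/

open scoped Classical BigOperators

open Finset Real

section LogSumExp

variable {ι : Type*} [Fintype ι]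

noncomputable def logSumExp (x : ι → ℝ) : ℝ := log (∑ i, exp (x i))

noncomputable def softmax (x : ι → ℝ) (i : ι) : ℝ := exp (x i - logSumExp x)

theorem softmax_pos (x : ι → ℝ) (i : ι) : 0 < softmax x i := exp_pos _

theorem sum_mul_log_div_softmax (q x : ι → ℝ) (hq : ∑ i, q i = 1) :
    ∑ i, q i * log (q i / softmax x i)
      = ∑ i, q i * log (q i) - ∑ i, q i * x i + logSumExp x := by
  have hterm : ∀ i, q i * log (q i / softmax x i)
      = q i * log (q i) - q i * x i + q i * logSumExp x := by
    intro i
    rcases eq_or_ne (q i) 0 with hqi | hqi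
    · simp [hqi]
    · rw [log_div hqi (softmax_pos x i).ne', softmax, log_exp]
      ring
  rw [sum_congr rfl fun i _ => hterm i, sum_add_distrib, sum_sub_distrib, ← sum_mul, hq, one_mul]

variable [Nonempty ι]

theorem exp_logSumExp (x : ι → ℝ) : exp (logSumExp x) = ∑ i, exp (x i) :=
  exp_log (sum_pos (fun i _ => exp_pos (x i)) univ_nonempty)

theorem sum_softmax (x : ι → ℝ) : ∑ i, softmax x i = 1 := by
  simp only [softmax, exp_sub, ← sum_div]
  rw [div_eq_one_iff_eq (exp_pos _).ne', exp_logSumExp]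

theorem logSumExp_add_lt {x y : ι → ℝ} (hxy : ∀ c, x - y ≠ Function.const ι c)
    {a b : ℝ} (ha : 0 < a) (hb : 0 < b) (hab : a + b = 1) :
    logSumExp (a • x + b • y) < a * logSumExp x + b * logSumExp y := by
  set M := a * logSumExp x + b * logSumExp y
  set u := fun i => x i - logSumExp x
  set v := fun i => y i - logSumExp y
  obtain ⟨i₀, hi₀⟩ : ∃ i, u i ≠ v i := by
    by_contra! h
    exact hxy (logSumExp x - logSumExp y) (funext fun i => by
      have := h i
      simp only [u, v] at this
      simp only [Pi.sub_apply, Function.const_apply]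
      linarith)
  have hlt : ∑ i, exp (a * u i + b * v i) < 1 := calc
    ∑ i, exp (a * u i + b * v i) < ∑ i, (a * softmax x i + b * softmax y i) := by
      refine sum_lt_sum (fun i _ => ?_) ⟨i₀, mem_univ _, ?_⟩
      · exact convexOn_exp.2 (Set.mem_univ (u i)) (Set.mem_univ (v i)) ha.le hb.le hab
      · exact strictConvexOn_exp.2 (Set.mem_univ (u i₀)) (Set.mem_univ (v i₀)) hi₀ ha hb hab
    _ = 1 := by
      rw [sum_add_distrib, ← mul_sum, ← mul_sum, sum_softmax, sum_softmax, mul_one, mul_one, hab]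
  have hfactor : ∀ i, exp ((a • x + b • y) i) = exp (a * u i + b * v i) * exp M := by
    intro i
    rw [← exp_add]
    simp only [Pi.add_apply, Pi.smul_apply, smul_eq_mul, u, v, M]
    ring_nf
  rw [logSumExp, log_lt_iff_lt_exp (sum_pos (fun i _ => exp_pos _) univ_nonempty),
    sum_congr rfl fun i _ => hfactor i, ← sum_mul]
  exact mul_lt_of_lt_one_left (exp_pos M) hlt

theorem strictConvexOn_logSumExp_comp {E : Type*} [AddCommGroup E] [Module ℝ E]
    (A : E →ₗ[ℝ] ι → ℝ) (hA : ∀ θ c, A θ = Function.const ι c → θ = 0) :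
    StrictConvexOn ℝ Set.univ (fun θ => logSumExp (A θ)) := by
  refine ⟨convex_univ, fun θ₁ _ θ₂ _ hne a b ha hb hab => ?_⟩
  simp only [map_add, map_smul, smul_eq_mul]
  refine logSumExp_add_lt (fun c hc => hne (sub_eq_zero.1 (hA _ c ?_))) ha hb hab
  rwa [map_sub]

end LogSumExp

theorem LinearIndependent.eq_zero_of_linearCombination_eq_smul {R M σ : Type*} [Ring R]
    [AddCommGroup M] [Module R M] [Fintype σ] {v : σ → M} {w : M}
    (h : LinearIndependent R (fun o : Option σ => o.elim w v)) {θ : σ → R} {c : R}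
    (hθ : Fintype.linearCombination R v θ = c • w) : θ = 0 := by
  have hcomb : ∑ o : Option σ, o.elim (-c) θ • o.elim w v = 0 := by
    simp only [Fintype.sum_option, Option.elim_none, Option.elim_some]
    rw [← Fintype.linearCombination_apply, hθ, neg_smul, neg_add_cancel]
  funext s
  exact Fintype.linearIndependent_iff.1 h _ hcomb (some s)

theorem KL_strictConvex_of_linearIndependent_features_general
    {Ω : Type*} [Fintype Ω] [Nonempty Ω] [PartialOrder Ω]
    (S : Finset Ω)
    (φ : {s : Ω // s ∈ S} → Ω → ℝ)
    (hφ : ∀ (s : {s : Ω // s ∈ S}) (ω : Ω), φ s ω = if (s : Ω) ≤ ω then 1 else 0)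
    (hli : LinearIndependent ℝ
      (fun o : Option {s : Ω // s ∈ S} => o.elim (fun _ : Ω => (1 : ℝ)) φ))
    (phat : Ω → ℝ) (hphat1 : ∑ ω : Ω, phat ω = 1)
    (ψ : ({s : Ω // s ∈ S} → ℝ) → ℝ)
    (hψ : ∀ θ : {s : Ω // s ∈ S} → ℝ,
      ψ θ = Real.log (∑ ω : Ω,
        Real.exp (∑ s ∈ S.attach.filter (fun s : {s : Ω // s ∈ S} => (s : Ω) ≤ ω), θ s)))
    (p : ({s : Ω // s ∈ S} → ℝ) → Ω → ℝ)
    (hp : ∀ (θ : {s : Ω // s ∈ S} → ℝ) (ω : Ω), p θ ω =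
      Real.exp ((∑ s ∈ S.attach.filter (fun s : {s : Ω // s ∈ S} => (s : Ω) ≤ ω), θ s) - ψ θ))
    (KL : ({s : Ω // s ∈ S} → ℝ) → ℝ)
    (hKL : ∀ θ : {s : Ω // s ∈ S} → ℝ,
      KL θ = ∑ ω : Ω, phat ω * Real.log (phat ω / p θ ω)) :
    StrictConvexOn ℝ Set.univ KL ∧
    (∀ θ₁ θ₂ : {s : Ω // s ∈ S} → ℝ,
      (∀ θ, KL θ₁ ≤ KL θ) → (∀ θ, KL θ₂ ≤ KL θ) → θ₁ = θ₂) := by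
  set A := Fintype.linearCombination ℝ φ
  have hA : ∀ θ ω,
      ∑ s ∈ S.attach.filter (fun s : {s : Ω // s ∈ S} => (s : Ω) ≤ ω), θ s = A θ ω := by
    intro θ ω
    simp [A, Fintype.linearCombination_apply, sum_filter, hφ]
  have hp_softmax : ∀ θ, p θ = softmax (A θ) := fun θ => funext fun ω => by
    simp only [hp, hψ, hA, softmax, logSumExp]
  have hKL_eq : KL = fun θ =>
      (logSumExp (A θ) - (Fintype.linearCombination ℝ phat ∘ₗ A) θ)
        + ∑ ω, phat ω * log (phat ω) := by
    funext θ
    rw [hKL, hp_softmax, sum_mul_log_div_softmax _ _ hphat1]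
    simp only [LinearMap.comp_apply, Fintype.linearCombination_apply, smul_eq_mul, mul_comm]
    ring
  have hconst : ∀ θ c, A θ = Function.const Ω c → θ = 0 := fun θ c h =>
    hli.eq_zero_of_linearCombination_eq_smul
      (h.trans (by ext; simp : Function.const Ω c = c • fun _ => (1 : ℝ)))
  have hsc : StrictConvexOn ℝ Set.univ KL := hKL_eq ▸
    ((strictConvexOn_logSumExp_comp A hconst).sub_concaveOn
      (LinearMap.concaveOn _ convex_univ)).add_const _
  exact ⟨hsc, fun θ₁ θ₂ h₁ h₂ => hsc.eq_of_isMinOn (fun θ _ => h₁ θ) (fun θ _ => h₂ θ)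
    trivial trivial⟩

/-- Strict convexity and uniqueness of the optimal parameters under linear
independence of the indicator features `φ_s(ω) = 1[s ≤ ω]` together with the
constant vector: the KL divergence `θ ↦ D_KL(p̂, p_θ)` is strictly convex on
`ℝ^S` and hence has at most one minimizer. -/
theorem KL_strictConvex_of_linearIndependent_features
    {Ω : Type*} [Fintype Ω] [Nonempty Ω] [PartialOrder Ω]
    (S : Finset Ω)
    (φ : {s : Ω // s ∈ S} → Ω → ℝ)
    (hφ : ∀ (s : {s : Ω // s ∈ S}) (ω : Ω), φ s ω = if (s : Ω) ≤ ω then 1 else 0)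
    (hli : LinearIndependent ℝ
      (fun o : Option {s : Ω // s ∈ S} => o.elim (fun _ : Ω => (1 : ℝ)) φ))
    (phat : Ω → ℝ) (hphat0 : ∀ ω, 0 ≤ phat ω) (hphat1 : ∑ ω : Ω, phat ω = 1)
    (ψ : ({s : Ω // s ∈ S} → ℝ) → ℝ)
    (hψ : ∀ θ : {s : Ω // s ∈ S} → ℝ,
      ψ θ = Real.log (∑ ω : Ω,
        Real.exp (∑ s ∈ S.attach.filter (fun s : {s : Ω // s ∈ S} => (s : Ω) ≤ ω), θ s)))
    (p : ({s : Ω // s ∈ S} → ℝ) → Ω → ℝ)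
    (hp : ∀ (θ : {s : Ω // s ∈ S} → ℝ) (ω : Ω), p θ ω =
      Real.exp ((∑ s ∈ S.attach.filter (fun s : {s : Ω // s ∈ S} => (s : Ω) ≤ ω), θ s) - ψ θ))
    (KL : ({s : Ω // s ∈ S} → ℝ) → ℝ)
    (hKL : ∀ θ : {s : Ω // s ∈ S} → ℝ,
      KL θ = ∑ ω : Ω, phat ω * Real.log (phat ω / p θ ω)) :
    StrictConvexOn ℝ Set.univ KL ∧
    (∀ θ₁ θ₂ : {s : Ω // s ∈ S} → ℝ,
      (∀ θ, KL θ₁ ≤ KL θ) → (∀ θ, KL θ₂ ≤ KL θ) → θ₁ = θ₂) :=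
  KL_strictConvex_of_linearIndependent_features_general S φ hφ hli phat hphat1 ψ hψ p hp KL hKL
end
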